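/- (Non-robustness of the binary readout of the non-robust multi-class network) Let d ≥ 3 and k ≥ 2 with 2(k+1) · ln d ≤ √d, let μ : Fin k → ℝ^d be orthogonal equinorm cluster features with binary cluster labels s, and suppose for some real c ≥ 1 that J₊ and J₋ are nonempty with |J₊| ≥ k/(1+c) and |J₋| ≥ k/(1+c). Consider the multi-class network with f_j(x) = ReLU(⟨μ_j + Σ_{l : s l = s j} μ_l, x⟩), softmax probabilities p_j(x) = exp(f_j(x)) / Σ_{l ∈ Fin k} exp(f_l(x)), and binary readout F^binary(x) = Σ_{j∈J₊} p_j(x) − Σ_{j∈J₋} p_j(x). Set δ := 3(1+c) · √(d/k). Then the probability over (J, ξ) ~ (uniform on Fin k) ⊗ γ_d that sgn(F^binary(μ_J + ξ + ρ)) = s J holds for ALL perturbations ρ with ‖ρ‖ ≤ δ is at most 2k · d^{−(ln d)/2}. -/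

import Mathlib

open MeasureTheory ProbabilityTheory Real Finset
open scoped RealInnerProductSpace

/-- The standard Gaussian measure on `ℝ^d`. -/
noncomputable def stdGaussian (d : ℕ) : Measure (EuclideanSpace ℝ (Fin d)) :=
  (Measure.pi fun _ : Fin d => gaussianReal 0 1).map (WithLp.toLp 2)

/-- The sign function: `1` on positive reals, `-1` otherwise. -/
noncomputable def sgn (z : ℝ) : ℝ := if 0 < z then 1 else -1

/-- The ReLU activation. -/
noncomputable def relu (z : ℝ) : ℝ := max z 0

/-- The `j`-th component of the non-robust multi-class network. -/
noncomputable def fMulti {d k : ℕ} (μ : Fin k → EuclideanSpace ℝ (Fin d)) (s : Fin k → ℝ)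
    (j : Fin k) (x : EuclideanSpace ℝ (Fin d)) : ℝ :=
  relu ⟪μ j + ∑ l ∈ univ.filter (fun l => s l = s j), μ l, x⟫

/-- The softmax probability of class `j` under the non-robust multi-class network. -/
noncomputable def pMulti {d k : ℕ} (μ : Fin k → EuclideanSpace ℝ (Fin d)) (s : Fin k → ℝ)
    (j : Fin k) (x : EuclideanSpace ℝ (Fin d)) : ℝ :=
  Real.exp (fMulti μ s j x) / ∑ l : Fin k, Real.exp (fMulti μ s l x)

/-- The binary readout of the non-robust multi-class network. -/
noncomputable def Fbinary {d k : ℕ} (μ : Fin k → EuclideanSpace ℝ (Fin d)) (s : Fin k → ℝ)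
    (x : EuclideanSpace ℝ (Fin d)) : ℝ :=
  ∑ j ∈ univ.filter (fun j => s j = 1), pMulti μ s j x -
    ∑ j ∈ univ.filter (fun j => s j = -1), pMulti μ s j x

/-! On the event that `|⟪w j, ξ⟫| ≤ ln d · ‖w j‖` for the weight vector
`w j = μ j + ∑_{s l = s j} μ l` of every unit, the perturbation `ρ = -τ s_J ∑_l s_l μ_l`
with `τ = 3(1+c)/k` has norm exactly `δ`. Since `⟪w j, ∑_l s_l μ_l⟫ = d s_j (1 + |{l | s l = s j}|)`
and `ln d · ‖w j‖ ≤ d/2`, it drives every unit of the class of `J` below zero and every unit of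
the other class above `k`, so the softmax mass of the wrong class dominates and the sign of the
readout flips. The robust event therefore lies in the complement of that event, and
`⟪w j, ξ⟫ ∼ N(0, ‖w j‖²)` is sub-Gaussian, so a union bound over `j` and both tails gives
`2k · exp(-(ln d)²/2) = 2k · d^(-(ln d)/2)`. -/

open scoped NNReal

section Gaussian

variable {E : Type*} [NormedAddCommGroup E] [InnerProductSpace ℝ E] [FiniteDimensional ℝ E]
  [MeasurableSpace E] [BorelSpace E]

lemma hasSubgaussianMGF_id_gaussianReal (v : ℝ≥0) :
    HasSubgaussianMGF id v (gaussianReal 0 v) where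
  integrable_exp_mul t := integrable_exp_mul_gaussianReal t
  mgf_le t := by simp [mgf_id_gaussianReal]

lemma map_inner_stdGaussian (w : E) :
    (ProbabilityTheory.stdGaussian E).map (fun x => ⟪w, x⟫) = gaussianReal 0 (‖w‖₊ ^ 2) := by
  have h := IsGaussian.map_eq_gaussianReal (μ := ProbabilityTheory.stdGaussian E) (innerSL ℝ w)
  rw [integral_strongDual_stdGaussian, variance_dual_stdGaussian, innerSL_apply_norm] at h
  rwa [← coe_nnnorm, ← NNReal.coe_pow, Real.toNNReal_coe] at h

lemma hasSubgaussianMGF_inner_stdGaussian (w : E) :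
    HasSubgaussianMGF (fun x => ⟪w, x⟫) (‖w‖₊ ^ 2) (ProbabilityTheory.stdGaussian E) := by
  rw [← HasSubgaussianMGF.id_map_iff (by fun_prop), map_inner_stdGaussian]
  exact hasSubgaussianMGF_id_gaussianReal _

lemma stdGaussian_abs_inner_gt_le (w : E) {t : ℝ} (ht : 0 ≤ t) :
    ProbabilityTheory.stdGaussian E {x | t * ‖w‖ < |⟪w, x⟫|} ≤
      ENNReal.ofReal (2 * exp (-t ^ 2 / 2)) := by
  rcases eq_or_ne w 0 with rfl | hw
  · simp
  have hw : 0 < ‖w‖ := norm_pos_iff.2 hw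
  have htail : ∀ X : E → ℝ, HasSubgaussianMGF X (‖w‖₊ ^ 2) (ProbabilityTheory.stdGaussian E) →
      ProbabilityTheory.stdGaussian E {x | t * ‖w‖ ≤ X x} ≤ ENNReal.ofReal (exp (-t ^ 2 / 2)) := by
    intro X hX
    rw [← ofReal_measureReal]
    refine ENNReal.ofReal_le_ofReal ((hX.measure_ge_le (by positivity)).trans_eq ?_)
    congr 1
    field_simp
    simp
  calc _ ≤ ProbabilityTheory.stdGaussian E
        ({x | t * ‖w‖ ≤ ⟪w, x⟫} ∪ {x | t * ‖w‖ ≤ -⟪w, x⟫}) := by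
        refine measure_mono fun x hx => ?_
        simp only [Set.mem_ofPred_eq, Set.mem_union] at hx ⊢
        rcases lt_abs.1 hx with h | h
        exacts [Or.inl h.le, Or.inr h.le]
    _ ≤ _ := measure_union_le _ _
    _ ≤ _ := add_le_add (htail _ (hasSubgaussianMGF_inner_stdGaussian w))
        (htail _ (hasSubgaussianMGF_inner_stdGaussian w).neg)
    _ = _ := by rw [← ENNReal.ofReal_add (by positivity) (by positivity)]; ring_nf

lemma stdGaussian_exists_abs_inner_gt_le {ι : Type*} [Fintype ι] (w : ι → E) {t : ℝ}
    (ht : 0 ≤ t) :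
    ProbabilityTheory.stdGaussian E {x | ∃ i, t * ‖w i‖ < |⟪w i, x⟫|} ≤
      ENNReal.ofReal (2 * Fintype.card ι * exp (-t ^ 2 / 2)) := by
  rw [Set.ofPred_exists]
  refine (measure_iUnion_fintype_le _ _).trans ?_
  refine (Finset.sum_le_sum fun i _ => stdGaussian_abs_inner_gt_le (w i) ht).trans_eq ?_
  rw [Finset.sum_const, nsmul_eq_mul, card_univ, ← ENNReal.ofReal_natCast,
    ← ENNReal.ofReal_mul (by positivity)]
  ring_nf

end Gaussian

lemma stdGaussian_eq (d : ℕ) :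
    stdGaussian d = ProbabilityTheory.stdGaussian (EuclideanSpace ℝ (Fin d)) :=
  map_pi_eq_stdGaussian

lemma sgn_ne_of_mul_neg {σ z : ℝ} (hσ : σ = 1 ∨ σ = -1) (h : σ * z < 0) : sgn z ≠ σ := by
  rcases hσ with rfl | rfl <;> unfold sgn <;> split_ifs <;> norm_num <;> linarith

lemma sum_exp_relu_lt_sum {ι : Type*} {P N : Finset ι} {g : ι → ℝ} (hP : ∀ j ∈ P, g j ≤ 0)
    {j₀ : ι} (hj₀ : j₀ ∈ N) (h : (#P : ℝ) < g j₀) :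
    ∑ j ∈ P, exp (relu (g j)) < ∑ j ∈ N, exp (relu (g j)) := calc
  ∑ j ∈ P, exp (relu (g j)) = #P := by
    rw [Finset.sum_congr rfl fun j hj => by rw [relu, max_eq_right (hP j hj), exp_zero]]
    simp
  _ < relu (g j₀) + 1 := h.trans_le (by unfold relu; linarith [le_max_left (g j₀) 0])
  _ ≤ exp (relu (g j₀)) := add_one_le_exp _
  _ ≤ ∑ j ∈ N, exp (relu (g j)) :=
    single_le_sum (f := fun j => exp (relu (g j))) (fun j _ => (exp_pos _).le) hj₀

section Features

variable {E ι : Type*} [NormedAddCommGroup E] {μ : ι → E}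

noncomputable def clusterWeight [Fintype ι] (μ : ι → E) (s : ι → ℝ) (j : ι) : E :=
  μ j + ∑ l ∈ univ.filter (fun l => s l = s j), μ l

lemma norm_clusterWeight_le [Fintype ι] {r : ℝ} (hμ : ∀ j, ‖μ j‖ = r) (s : ι → ℝ) (j : ι) :
    ‖clusterWeight μ s j‖ ≤ (Fintype.card ι + 1) * r := by
  have hr : 0 ≤ r := hμ j ▸ norm_nonneg _
  have hcard := card_filter_le univ fun l => s l = s j
  calc ‖clusterWeight μ s j‖
      ≤ ‖μ j‖ + ∑ l ∈ univ.filter (fun l => s l = s j), ‖μ l‖ :=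
        (norm_add_le _ _).trans (by gcongr; exact norm_sum_le _ _)
    _ = (#(univ.filter fun l => s l = s j) + 1) * r := by simp [hμ]; ring
    _ ≤ (Fintype.card ι + 1) * r := by gcongr; exact_mod_cast hcard

variable [InnerProductSpace ℝ E] {D : ℝ}

noncomputable def labelDirection [Fintype ι] (μ : ι → E) (s : ι → ℝ) : E := ∑ l, s l • μ l

lemma inner_eq_ite_of_orthogonal [DecidableEq ι] (hD : 0 ≤ D) (hnorm : ∀ j, ‖μ j‖ = √D)
    (horth : ∀ i j, i ≠ j → ⟪μ i, μ j⟫ = 0) (i j : ι) :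
    ⟪μ i, μ j⟫ = if i = j then D else 0 := by
  split_ifs with h
  · rw [h, real_inner_self_eq_norm_sq, hnorm, sq_sqrt hD]
  · exact horth i j h

lemma sum_inner_eq_ite [DecidableEq ι] (hμ : ∀ i j, ⟪μ i, μ j⟫ = if i = j then D else 0)
    (A : Finset ι) (j : ι) :
    ⟪∑ l ∈ A, μ l, μ j⟫ = if j ∈ A then D else 0 := by
  simp [sum_inner, hμ]

variable [Fintype ι] [DecidableEq ι]

lemma inner_labelDirection (hμ : ∀ i j, ⟪μ i, μ j⟫ = if i = j then D else 0) (s : ι → ℝ)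
    (i : ι) : ⟪μ i, labelDirection μ s⟫ = D * s i := by
  simp [labelDirection, inner_sum, inner_smul_right, hμ, mul_comm]

lemma inner_clusterWeight_labelDirection (hμ : ∀ i j, ⟪μ i, μ j⟫ = if i = j then D else 0)
    (s : ι → ℝ) (j : ι) :
    ⟪clusterWeight μ s j, labelDirection μ s⟫ =
      D * s j * (1 + #(univ.filter fun l => s l = s j)) := by
  rw [clusterWeight, inner_add_left, sum_inner,
    Finset.sum_congr rfl fun l hl => by rw [inner_labelDirection hμ, (mem_filter.1 hl).2]]
  simp [inner_labelDirection hμ]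
  ring

lemma inner_clusterWeight (hμ : ∀ i j, ⟪μ i, μ j⟫ = if i = j then D else 0) (s : ι → ℝ)
    (j i : ι) :
    ⟪clusterWeight μ s j, μ i⟫ = (if j = i then D else 0) + if s i = s j then D else 0 := by
  simp [clusterWeight, inner_add_left, sum_inner_eq_ite hμ, hμ]

lemma norm_labelDirection (hμ : ∀ i j, ⟪μ i, μ j⟫ = if i = j then D else 0) {s : ι → ℝ}
    (hs : ∀ j, s j = 1 ∨ s j = -1) :
    ‖labelDirection μ s‖ = √(D * Fintype.card ι) := by
  have hs2 : ∀ j, s j * s j = 1 := fun j => by rcases hs j with h | h <;> simp [h]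
  rw [← sqrt_sq (norm_nonneg _), ← real_inner_self_eq_norm_sq]
  congr 1
  nth_rw 1 [labelDirection]
  simp [sum_inner, real_inner_smul_left, inner_labelDirection hμ, mul_left_comm, hs2, mul_comm]

end Features

section Network

variable {d k : ℕ} {μ : Fin k → EuclideanSpace ℝ (Fin d)} {s : Fin k → ℝ}

lemma fMulti_eq_relu_inner (j : Fin k) (x : EuclideanSpace ℝ (Fin d)) :
    fMulti μ s j x = relu ⟪clusterWeight μ s j, x⟫ := rfl

lemma mul_Fbinary_eq {σ : ℝ} (hσ : σ = 1 ∨ σ = -1) (x : EuclideanSpace ℝ (Fin d)) :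
    σ * Fbinary μ s x =
      (∑ j ∈ univ.filter (fun j => s j = σ), exp (fMulti μ s j x) -
        ∑ j ∈ univ.filter (fun j => s j = -σ), exp (fMulti μ s j x)) /
      ∑ l, exp (fMulti μ s l x) := by
  rcases hσ with rfl | rfl <;> simp only [Fbinary, pMulti, ← sum_div, neg_neg] <;> ring

lemma sgn_Fbinary_ne_of_sum_lt {σ : ℝ} (hσ : σ = 1 ∨ σ = -1) {x : EuclideanSpace ℝ (Fin d)}
    (h : ∑ j ∈ univ.filter (fun j => s j = σ), exp (fMulti μ s j x) <
      ∑ j ∈ univ.filter (fun j => s j = -σ), exp (fMulti μ s j x)) :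
    sgn (Fbinary μ s x) ≠ σ := by
  refine sgn_ne_of_mul_neg hσ ?_
  have hZ : ∑ j ∈ univ.filter (fun j => s j = -σ), exp (fMulti μ s j x) ≤
      ∑ l, exp (fMulti μ s l x) :=
    sum_le_sum_of_subset_of_nonneg (subset_univ _) fun l _ _ => (exp_pos _).le
  have hP : 0 ≤ ∑ j ∈ univ.filter (fun j => s j = σ), exp (fMulti μ s j x) :=
    sum_nonneg fun l _ => (exp_pos _).le
  rw [mul_Fbinary_eq hσ]
  exact div_neg_of_neg_of_pos (by linarith) (by linarith)

lemma sgn_Fbinary_perturbed_ne {D : ℝ} (hμ : ∀ i j, ⟪μ i, μ j⟫ = if i = j then D else 0)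
    (hs : ∀ j, s j = 1 ∨ s j = -1) (hkD : (k : ℝ) ≤ D) {τ : ℝ} (hτ : 0 ≤ τ) (J : Fin k)
    (hsame : 3 ≤ τ * #(univ.filter fun l => s l = s J))
    (hother : 3 ≤ τ * #(univ.filter fun l => s l = -s J))
    {ξ : EuclideanSpace ℝ (Fin d)} (hξ : ∀ j, |⟪clusterWeight μ s j, ξ⟫| ≤ D / 2) :
    sgn (Fbinary μ s (μ J + ξ - (τ * s J) • labelDirection μ s)) ≠ s J := by
  set σ := s J
  set x := μ J + ξ - (τ * σ) • labelDirection μ s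
  have hσ2 : σ * σ = 1 := by rcases hs J with h | h <;> simp [σ, h]
  have hD : 0 < D := by linarith [(Nat.cast_pos (α := ℝ)).2 J.pos]
  have hinner : ∀ j, ⟪clusterWeight μ s j, x⟫ = ⟪clusterWeight μ s j, μ J⟫ +
      ⟪clusterWeight μ s j, ξ⟫ - τ * σ * (D * s j * (1 + #(univ.filter fun l => s l = s j))) := by
    intro j
    rw [inner_sub_right, inner_add_right, real_inner_smul_right,
      inner_clusterWeight_labelDirection hμ]
  have hsignal : ∀ j, 0 ≤ ⟪clusterWeight μ s j, μ J⟫ ∧ ⟪clusterWeight μ s j, μ J⟫ ≤ 2 * D := by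
    intro j
    rw [inner_clusterWeight hμ]
    constructor <;> split_ifs <;> linarith
  have hsame_neg : ∀ j ∈ univ.filter (fun j => s j = σ), ⟪clusterWeight μ s j, x⟫ ≤ 0 := by
    intro j hj
    have hj : s j = σ := (mem_filter.1 hj).2
    have hρ : τ * σ * (D * σ * (1 + #(univ.filter fun l => s l = σ))) =
        D * τ + D * (τ * #(univ.filter fun l => s l = σ)) := by
      linear_combination (τ * D * (1 + #(univ.filter fun l => s l = σ))) * hσ2
    rw [hinner, hj, hρ]
    linarith [(abs_le.1 (hξ j)).2, (hsignal j).2, mul_nonneg hD.le hτ,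
      mul_le_mul_of_nonneg_left hsame hD.le]
  have hother_pos : ∀ j ∈ univ.filter (fun j => s j = -σ),
      (#(univ.filter fun j => s j = σ) : ℝ) < ⟪clusterWeight μ s j, x⟫ := by
    intro j hj
    have hj : s j = -σ := (mem_filter.1 hj).2
    have hcard : (#(univ.filter fun j => s j = σ) : ℝ) ≤ k := by
      exact_mod_cast (card_filter_le _ _).trans (card_univ.trans (Fintype.card_fin k)).le
    have hρ : τ * σ * (D * -σ * (1 + #(univ.filter fun l => s l = -σ))) =
        -(D * τ + D * (τ * #(univ.filter fun l => s l = -σ))) := by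
      linear_combination (-τ * D * (1 + #(univ.filter fun l => s l = -σ))) * hσ2
    rw [hinner, hj, hρ]
    linarith [(abs_le.1 (hξ j)).1, (hsignal j).1, mul_nonneg hD.le hτ,
      mul_le_mul_of_nonneg_left hother hD.le]
  obtain ⟨j₀, hj₀⟩ : (univ.filter fun j => s j = -σ).Nonempty := by
    rw [← card_pos, Nat.pos_iff_ne_zero]
    intro h
    rw [h] at hother
    norm_num at hother
  refine sgn_Fbinary_ne_of_sum_lt (hs J) ?_
  simp only [fMulti_eq_relu_inner]
  exact sum_exp_relu_lt_sum hsame_neg hj₀ (hother_pos j₀ hj₀)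

lemma exists_perturbation_sgn_Fbinary_ne {D : ℝ}
    (hμ : ∀ i j, ⟪μ i, μ j⟫ = if i = j then D else 0) (hs : ∀ j, s j = 1 ∨ s j = -1)
    (hkD : (k : ℝ) ≤ D) {c : ℝ} (hc : 0 < 1 + c)
    (hpos : (k : ℝ) / (1 + c) ≤ (univ.filter (fun j => s j = 1)).card)
    (hneg : (k : ℝ) / (1 + c) ≤ (univ.filter (fun j => s j = -1)).card) (J : Fin k)
    {ξ : EuclideanSpace ℝ (Fin d)} (hξ : ∀ j, |⟪clusterWeight μ s j, ξ⟫| ≤ D / 2) :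
    ∃ ρ : EuclideanSpace ℝ (Fin d), ‖ρ‖ ≤ 3 * (1 + c) * √(D / k) ∧
      sgn (Fbinary μ s (μ J + ξ + ρ)) ≠ s J := by
  have hk : (0 : ℝ) < k := Nat.cast_pos.2 J.pos
  set τ := 3 * (1 + c) / k
  have hτk : τ * k = 3 * (1 + c) := div_mul_cancel₀ _ hk.ne'
  have hτ : ∀ n : ℝ, k / (1 + c) ≤ n → 3 ≤ τ * n := fun n hn => calc
    3 = τ * (k / (1 + c)) := by rw [mul_div_assoc', hτk, mul_div_cancel_right₀ _ hc.ne']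
    _ ≤ τ * n := by gcongr
  have hcard : ∀ σ : ℝ, σ = 1 ∨ σ = -1 → 3 ≤ τ * #(univ.filter fun l => s l = σ) := by
    rintro σ (rfl | rfl)
    exacts [hτ _ hpos, hτ _ hneg]
  have hsJ : |s J| = 1 := by rcases hs J with h | h <;> simp [h]
  have hsqrt : √(D * k) = k * √(D / k) := by
    rw [show D * k = k ^ 2 * (D / k) by field_simp, sqrt_mul (sq_nonneg _), sqrt_sq hk.le]
  refine ⟨-((τ * s J) • labelDirection μ s), le_of_eq ?_, ?_⟩
  · rw [norm_neg, norm_smul, norm_labelDirection hμ hs, Fintype.card_fin, norm_mul, norm_eq_abs,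
      norm_eq_abs, hsJ, mul_one, abs_of_nonneg (by positivity), hsqrt, ← mul_assoc, hτk]
  · rw [← sub_eq_add_neg]
    refine sgn_Fbinary_perturbed_ne hμ hs hkD (by positivity) J (hcard _ (hs J)) (hcard _ ?_) hξ
    rcases hs J with h | h <;> simp [h]

end Network

lemma natCast_le_of_two_mul_succ_mul_log_le_sqrt {d k : ℕ} (hd : 2 ≤ d)
    (hlog : 2 * (k + 1) * log d ≤ √d) : (k : ℝ) ≤ d := by
  have hlog_pos : 1 / 2 < log d := by
    have : log 2 ≤ log d := log_le_log two_pos (by exact_mod_cast hd)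
    linarith [log_two_gt_d9]
  have h : (k : ℝ) + 1 ≤ √d := by nlinarith
  nlinarith [(le_sqrt (by positivity) (Nat.cast_nonneg d)).1 h]

lemma log_mul_norm_clusterWeight_le {d k : ℕ} (hlog : 2 * (k + 1) * log d ≤ √d)
    {μ : Fin k → EuclideanSpace ℝ (Fin d)} (hnorm : ∀ j, ‖μ j‖ = √d) (s : Fin k → ℝ)
    (j : Fin k) : log d * ‖clusterWeight μ s j‖ ≤ d / 2 := by
  have h := norm_clusterWeight_le hnorm s j
  rw [Fintype.card_fin] at h
  calc log d * ‖clusterWeight μ s j‖ ≤ log d * ((k + 1) * √d) := by gcongr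
    _ ≤ √d / 2 * √d := by nlinarith [sqrt_nonneg (d : ℝ)]
    _ = d / 2 := by rw [div_mul_eq_mul_div, mul_self_sqrt (Nat.cast_nonneg d)]

theorem multiclass_binary_readout_nonrobust_general (d k : ℕ) (hd : 3 ≤ d)
    (hlog : 2 * (k + 1) * Real.log d ≤ Real.sqrt d)
    (μ : Fin k → EuclideanSpace ℝ (Fin d))
    (hnorm : ∀ j, ‖μ j‖ = Real.sqrt d)
    (horth : ∀ i j, i ≠ j → ⟪μ i, μ j⟫ = 0)
    (s : Fin k → ℝ) (hs : ∀ j, s j = 1 ∨ s j = -1)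
    (c : ℝ) (hc : 1 ≤ c)
    (hpos : (k : ℝ) / (1 + c) ≤ (univ.filter (fun j => s j = 1)).card)
    (hneg : (k : ℝ) / (1 + c) ≤ (univ.filter (fun j => s j = -1)).card) :
    (((k : ENNReal)⁻¹ • (Measure.count : Measure (Fin k))).prod (stdGaussian d))
        {p : Fin k × EuclideanSpace ℝ (Fin d) |
          ∀ ρ : EuclideanSpace ℝ (Fin d), ‖ρ‖ ≤ 3 * (1 + c) * Real.sqrt (d / k) →
            sgn (Fbinary μ s (μ p.1 + p.2 + ρ)) = s p.1} ≤
      ENNReal.ofReal (2 * k * (d : ℝ) ^ (-(Real.log d) / 2)) := by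
  have hd0 : (0 : ℝ) < d := by positivity
  have hμ := inner_eq_ite_of_orthogonal hd0.le hnorm horth
  have hkd := natCast_le_of_two_mul_succ_mul_log_le_sqrt (by omega) hlog
  set w := clusterWeight μ s
  have hrobust : {p : Fin k × EuclideanSpace ℝ (Fin d) |
          ∀ ρ : EuclideanSpace ℝ (Fin d), ‖ρ‖ ≤ 3 * (1 + c) * Real.sqrt (d / k) →
            sgn (Fbinary μ s (μ p.1 + p.2 + ρ)) = s p.1} ⊆
      Set.univ ×ˢ {ξ | ∃ j, log d * ‖w j‖ < |⟪w j, ξ⟫|} := by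
    rintro ⟨J, ξ⟩ hJ
    refine ⟨trivial, ?_⟩
    by_contra hbad
    obtain ⟨ρ, hρ, hsgn⟩ := exists_perturbation_sgn_Fbinary_ne hμ hs hkd (by linarith) hpos hneg J
      fun j => (not_lt.1 fun h => hbad ⟨j, h⟩).trans (log_mul_norm_clusterWeight_le hlog hnorm s j)
    exact hsgn (hJ ρ hρ)
  rw [stdGaussian_eq]
  calc _ ≤ _ := measure_mono hrobust
    _ = _ := Measure.prod_prod _ _
    _ ≤ ProbabilityTheory.stdGaussian _ {ξ | ∃ j, log d * ‖w j‖ < |⟪w j, ξ⟫|} :=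
        mul_le_of_le_one_left bot_le (by simp [ENNReal.inv_mul_le_one])
    _ ≤ ENNReal.ofReal (2 * k * exp (-log d ^ 2 / 2)) := by
        simpa using stdGaussian_exists_abs_inner_gt_le w (log_natCast_nonneg d)
    _ = _ := by rw [rpow_def_of_pos hd0]; ring_nf

theorem multiclass_binary_readout_nonrobust (d k : ℕ) (hd : 3 ≤ d) (hk : 2 ≤ k)
    (hlog : 2 * (k + 1) * Real.log d ≤ Real.sqrt d)
    (μ : Fin k → EuclideanSpace ℝ (Fin d))
    (hnorm : ∀ j, ‖μ j‖ = Real.sqrt d)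
    (horth : ∀ i j, i ≠ j → ⟪μ i, μ j⟫ = 0)
    (s : Fin k → ℝ) (hs : ∀ j, s j = 1 ∨ s j = -1)
    (c : ℝ) (hc : 1 ≤ c)
    (hpos' : (univ.filter (fun j => s j = 1)).Nonempty)
    (hneg' : (univ.filter (fun j => s j = -1)).Nonempty)
    (hpos : (k : ℝ) / (1 + c) ≤ (univ.filter (fun j => s j = 1)).card)
    (hneg : (k : ℝ) / (1 + c) ≤ (univ.filter (fun j => s j = -1)).card) :
    (((k : ENNReal)⁻¹ • (Measure.count : Measure (Fin k))).prod (stdGaussian d))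
        {p : Fin k × EuclideanSpace ℝ (Fin d) |
          ∀ ρ : EuclideanSpace ℝ (Fin d), ‖ρ‖ ≤ 3 * (1 + c) * Real.sqrt (d / k) →
            sgn (Fbinary μ s (μ p.1 + p.2 + ρ)) = s p.1} ≤
      ENNReal.ofReal (2 * k * (d : ℝ) ^ (-(Real.log d) / 2)) :=
  multiclass_binary_readout_nonrobust_general d k hd hlog μ hnorm horth s hs c hc hpos hneg
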